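/- Let G be a finite group acting on a set X, and let S be a G-invariant subset of X such that the action map respects a decomposition of S as a disjoint union indexed by orbit representatives. If h is any additive invariant on G-sets (a function to an abelian group additive over disjoint unions and constant on isomorphism classes), then h(Fix_{Γ,G}(X)) = Σ_{[α] ∈ Hom(Γ,G)/G} h(G ×_{C_G(α(Γ))} X^{α(Γ)}). -/

import Mathlib

/-!
Sorting the points `(α, x)` of `Fix_{Γ,G}(X)` by the conjugacy class of `α` splits it
equivariantly into one fibre per class, so additivity reduces the claim to identifying each
fibre. The fibre over `[α]` is `G ×_{C_G(α(Γ))} X^{α(Γ)}` via `(g, x) ↦ (gαg⁻¹, g • x)`: the map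
is onto since every point of the fibre has its homomorphism conjugate to `α`, and two pairs have
the same image exactly when they differ by an element of the centraliser of `α(Γ)`.
-/


variable {Γ G X : Type*} [Group Γ] [Group G] [MulAction G X]

/-- `Fix_{Γ,G}(X) = {(α,x) : α(γ)•x = x for all γ}`. -/
def FixPts (Γ G X : Type*) [Group Γ] [Group G] [MulAction G X] : Type _ :=
  {q : (Γ →* G) × X // ∀ γ : Γ, q.1 γ • q.2 = q.2}

/-- Conjugation of a homomorphism `α : Γ → G` by `g ∈ G`. -/
def conjHom (g : G) (α : Γ →* G) : Γ →* G :=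
  ((MulAut.conj g).toMonoidHom).comp α

/-- The `G`-action on `Fix_{Γ,G}(X)`: `g • (α,x) = (gαg⁻¹, g•x)`. -/
def fixSmul (g : G) (q : FixPts Γ G X) : FixPts Γ G X :=
  ⟨(conjHom g q.1.1, g • q.1.2), by
    intro γ
    simp only [conjHom, MonoidHom.comp_apply, MulEquiv.coe_toMonoidHom, MulAut.conj_apply,
      mul_smul, inv_smul_smul]
    rw [q.2 γ]⟩

/-- The conjugation equivalence relation on `Hom(Γ,G)`. -/
def conjSetoid (Γ G : Type*) [Group Γ] [Group G] : Setoid (Γ →* G) where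
  r α β := ∃ g : G, β = conjHom g α
  iseqv := by
    constructor
    · exact fun α => ⟨1, by ext γ; simp [conjHom]⟩
    · rintro α β ⟨g, rfl⟩
      exact ⟨g⁻¹, by ext γ; simp [conjHom, mul_assoc]⟩
    · rintro α β δ ⟨g, rfl⟩ ⟨g', rfl⟩
      exact ⟨g' * g, by ext γ; simp [conjHom, mul_assoc]⟩

/-- The fixed points `X^{α(Γ)}`. -/
def fixedByHom (α : Γ →* G) (X : Type*) [MulAction G X] : Type _ :=
  {x : X // ∀ γ : Γ, α γ • x = x}

/-- The action of the centralizer `C_G(α(Γ))` on `X^{α(Γ)}`. -/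
def centAct (α : Γ →* G) (k : Subgroup.centralizer (Set.range α)) (x : fixedByHom α X) :
    fixedByHom α X :=
  ⟨(k : G) • x.1, by
    intro γ
    rw [smul_smul, k.2 (α γ) ⟨γ, rfl⟩, ← smul_smul, x.2 γ]⟩

/-- The induced `G`-set `G ×_K Y`: quotient of `G × Y` by `(gk, y) ~ (g, k·y)`. -/
def IndGSet (K : Subgroup G) (Y : Type*) (act : K → Y → Y) : Type _ :=
  Quot (fun a b : G × Y => ∃ k : K, a.1 = b.1 * k ∧ b.2 = act k a.2)

/-- `G` acts on `G ×_K Y` by left multiplication on the first factor. -/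
def indSmul (K : Subgroup G) (Y : Type*) (act : K → Y → Y) (g : G) :
    IndGSet K Y act → IndGSet K Y act :=
  Quot.map (fun a => (g * a.1, a.2)) (by
    rintro a b ⟨k, h1, h2⟩
    exact ⟨k, by simp only []; rw [h1, mul_assoc], h2⟩)

lemma conjHom_one (α : Γ →* G) : conjHom 1 α = α := by ext γ; simp [conjHom]

lemma conjHom_mul (g g' : G) (α : Γ →* G) :
    conjHom (g * g') α = conjHom g (conjHom g' α) := by
  ext γ; simp [conjHom, mul_assoc]

universe u

/-- A `G`-set, packaged as a structure. -/
structure GSet (G : Type u) [Group G] : Type (u + 1) where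
  carrier : Type u
  smul : G → carrier → carrier
  one_smul : ∀ x, smul 1 x = x
  mul_smul : ∀ g g' x, smul (g * g') x = smul g (smul g' x)

/-- `Fix_{Γ,G}(X)` as a `G`-set. -/
def fixGSet (Γ G X : Type u) [Group Γ] [Group G] [MulAction G X] : GSet G where
  carrier := FixPts Γ G X
  smul := fixSmul
  one_smul := by
    rintro ⟨⟨α, x⟩, hx⟩
    apply Subtype.ext
    simp [fixSmul, conjHom_one]
  mul_smul := by
    rintro g g' ⟨⟨α, x⟩, hx⟩
    apply Subtype.ext
    simp [fixSmul, conjHom_mul, mul_smul]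

/-- `G ×_{C_G(α(Γ))} X^{α(Γ)}` as a `G`-set. -/
def indGSet (Γ G X : Type u) [Group Γ] [Group G] [MulAction G X] (α : Γ →* G) : GSet G where
  carrier := IndGSet (Subgroup.centralizer (Set.range ⇑α)) (fixedByHom α X) (centAct α)
  smul := indSmul _ _ _
  one_smul := by
    rintro x
    induction x using Quot.ind with
    | _ a => show Quot.mk _ (1 * a.1, a.2) = Quot.mk _ a; rw [one_mul]
  mul_smul := by
    rintro g g' x
    induction x using Quot.ind with
    | _ a =>
      show Quot.mk _ (g * g' * a.1, a.2) = Quot.mk _ (g * (g' * a.1), a.2)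
      rw [mul_assoc]

namespace GSet

variable {G : Type u} [Group G]

def fiber (Z : GSet G) {Q : Type u} (f : Z.carrier → Q) (hf : ∀ g z, f (Z.smul g z) = f z)
    (q : Q) : GSet G where
  carrier := {z // f z = q}
  smul g z := ⟨Z.smul g z, (hf g z).trans z.2⟩
  one_smul z := Subtype.ext (Z.one_smul z)
  mul_smul g g' z := Subtype.ext (Z.mul_smul g g' z)

lemma exists_equiv_sigma_fiber (Z : GSet G) {Q : Type u} (f : Z.carrier → Q)
    (hf : ∀ g z, f (Z.smul g z) = f z) :
    ∃ e : Z.carrier ≃ Σ q, (Z.fiber f hf q).carrier,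
      ∀ g z, e (Z.smul g z) = ⟨(e z).1, (Z.fiber f hf (e z).1).smul g (e z).2⟩ :=
  ⟨(Equiv.sigmaFiberEquiv f).symm, fun g z => Sigma.subtype_ext (hf g z) rfl⟩

end GSet

lemma conjHom_apply (g : G) (α : Γ →* G) (γ : Γ) : conjHom g α γ = g * α γ * g⁻¹ := rfl

lemma conjHom_eq_self_iff {k : G} {α : Γ →* G} :
    conjHom k α = α ↔ k ∈ Subgroup.centralizer (Set.range α) := by
  simp only [Subgroup.mem_centralizer_iff, Set.forall_mem_range, DFunLike.ext_iff, conjHom_apply]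
  exact forall_congr' fun γ => mul_inv_eq_iff_eq_mul.trans eq_comm

lemma conjHom_inv_conjHom (g : G) (α : Γ →* G) : conjHom g⁻¹ (conjHom g α) = α := by
  rw [← conjHom_mul, inv_mul_cancel, conjHom_one]

lemma conjHom_conjHom_inv (g : G) (α : Γ →* G) : conjHom g (conjHom g⁻¹ α) = α := by
  simpa using conjHom_inv_conjHom g⁻¹ α

lemma conjHom_inj_iff {g g' : G} {α : Γ →* G} :
    conjHom g α = conjHom g' α ↔ g'⁻¹ * g ∈ Subgroup.centralizer (Set.range α) := by
  rw [← conjHom_eq_self_iff, conjHom_mul]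
  constructor
  · intro h
    rw [h, conjHom_inv_conjHom]
  · intro h
    rw [← conjHom_conjHom_inv g' (conjHom g α), h]

lemma conjSetoid_mk_conjHom (g : G) (α : Γ →* G) :
    Quotient.mk (conjSetoid Γ G) (conjHom g α) = Quotient.mk (conjSetoid Γ G) α :=
  Quotient.sound ⟨g⁻¹, (conjHom_inv_conjHom g α).symm⟩

section FixFibers

variable {Γ G X : Type u} [Group Γ] [Group G] [MulAction G X]

def fixClass (p : FixPts Γ G X) : Quotient (conjSetoid Γ G) :=
  Quotient.mk _ p.1.1

lemma fixClass_smul (g : G) (p : FixPts Γ G X) :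
    fixClass ((fixGSet Γ G X).smul g p) = fixClass p :=
  conjSetoid_mk_conjHom g p.1.1

def fixOfPair (α : Γ →* G) (a : G × fixedByHom α X) : FixPts Γ G X :=
  ⟨(conjHom a.1 α, a.1 • a.2.1), fun γ => by
    rw [conjHom_apply, mul_smul, mul_smul, inv_smul_smul, a.2.2 γ]⟩

lemma fixOfPair_eq_iff (α : Γ →* G) (a b : G × fixedByHom α X) :
    fixOfPair α a = fixOfPair α b ↔
      ∃ k : Subgroup.centralizer (Set.range α), a.1 = b.1 * k ∧ b.2 = centAct α k a.2 := by
  constructor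
  · intro hab
    have hα : conjHom a.1 α = conjHom b.1 α := congrArg (fun p : FixPts Γ G X => p.1.1) hab
    have hx : a.1 • a.2.1 = b.1 • b.2.1 := congrArg (fun p : FixPts Γ G X => p.1.2) hab
    refine ⟨⟨b.1⁻¹ * a.1, conjHom_inj_iff.1 hα⟩, (mul_inv_cancel_left _ _).symm, Subtype.ext ?_⟩
    simp only [centAct, mul_smul, hx, inv_smul_smul]
  · rintro ⟨k, hab, hk⟩
    refine Subtype.ext (Prod.ext (conjHom_inj_iff.2 ?_) ?_)
    · rw [hab, inv_mul_cancel_left]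
      exact k.2
    · change a.1 • a.2.1 = b.1 • b.2.1
      rw [hk, hab]
      simp only [centAct, mul_smul]

def indToFix (α : Γ →* G) : (indGSet Γ G X α).carrier → FixPts Γ G X :=
  Quot.lift (fixOfPair α) fun a b hab => (fixOfPair_eq_iff α a b).2 hab

lemma indToFix_smul (α : Γ →* G) (g : G) (y : (indGSet Γ G X α).carrier) :
    indToFix α ((indGSet Γ G X α).smul g y) = (fixGSet Γ G X).smul g (indToFix α y) := by
  induction y using Quot.ind with
  | _ a => exact Subtype.ext (Prod.ext (conjHom_mul g a.1 α) (mul_smul g a.1 a.2.1))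

lemma indToFix_injective (α : Γ →* G) : Function.Injective (indToFix (X := X) α) := by
  rintro ⟨a⟩ ⟨b⟩ hab
  exact Quot.sound ((fixOfPair_eq_iff α a b).1 hab)

lemma fixClass_indToFix (α : Γ →* G) (y : (indGSet Γ G X α).carrier) :
    fixClass (indToFix α y) = Quotient.mk _ α := by
  induction y using Quot.ind with
  | _ a => exact conjSetoid_mk_conjHom a.1 α

lemma exists_indToFix_eq (α : Γ →* G) (p : FixPts Γ G X)
    (hp : fixClass p = Quotient.mk _ α) : ∃ y, indToFix α y = p := by
  obtain ⟨g, hg⟩ : ∃ g : G, p.1.1 = conjHom g α := Quotient.exact hp.symm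
  have hfix : ∀ γ, α γ • g⁻¹ • p.1.2 = g⁻¹ • p.1.2 := fun γ =>
    calc α γ • g⁻¹ • p.1.2 = g⁻¹ • p.1.1 γ • p.1.2 := by
          rw [hg, conjHom_apply, mul_smul, mul_smul, inv_smul_smul]
      _ = g⁻¹ • p.1.2 := by rw [p.2 γ]
  refine ⟨Quot.mk _ (g, ⟨g⁻¹ • p.1.2, hfix⟩), Subtype.ext (Prod.ext hg.symm ?_)⟩
  exact smul_inv_smul g p.1.2

lemma exists_equiv_indGSet_fiber (α : Γ →* G) :
    ∃ e : (indGSet Γ G X α).carrier ≃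
        ((fixGSet Γ G X).fiber fixClass fixClass_smul (Quotient.mk _ α)).carrier,
      ∀ g y, e ((indGSet Γ G X α).smul g y) =
        ((fixGSet Γ G X).fiber fixClass fixClass_smul (Quotient.mk _ α)).smul g (e y) := by
  refine ⟨Equiv.ofBijective (fun y => ⟨indToFix α y, fixClass_indToFix α y⟩) ⟨?_, ?_⟩, ?_⟩
  · exact fun y y' hyy' => indToFix_injective α (congrArg Subtype.val hyy')
  · rintro ⟨p, hp⟩
    obtain ⟨y, rfl⟩ := exists_indToFix_eq α p hp
    exact ⟨y, rfl⟩
  · exact fun g y => Subtype.ext (indToFix_smul α g y)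

end FixFibers

theorem stmt9_general (Γ G X : Type u) [Group Γ] [Group G] [MulAction G X]
    [Fintype (Quotient (conjSetoid Γ G))]
    (M : Type*) [AddCommGroup M] (h : GSet G → M)
    (hIso : ∀ Y Z : GSet G,
      (∃ e : Y.carrier ≃ Z.carrier, ∀ g y, e (Y.smul g y) = Z.smul g (e y)) → h Y = h Z)
    (hAdd : ∀ (ι : Type u) (_ : Fintype ι) (Y : ι → GSet G) (Z : GSet G),
      (∃ e : Z.carrier ≃ Σ i, (Y i).carrier,
        ∀ g z, e (Z.smul g z) = ⟨(e z).1, (Y (e z).1).smul g (e z).2⟩) →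
      h Z = ∑ᶠ i, h (Y i)) :
    h (fixGSet Γ G X) =
      ∑ᶠ q : Quotient (conjSetoid Γ G), h (indGSet Γ G X (Quotient.out q)) := by
  rw [hAdd _ inferInstance _ _ ((fixGSet Γ G X).exists_equiv_sigma_fiber fixClass fixClass_smul)]
  refine finsum_congr fun q => ?_
  have hq := hIso _ _ (exists_equiv_indGSet_fiber (X := X) (Quotient.out q))
  rw [Quotient.out_eq] at hq
  exact hq.symm

/-- Any additive invariant `h` on `G`-sets (valued in an abelian
group, additive over disjoint unions and constant on equivariant isomorphism
classes) satisfies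
`h(Fix_{Γ,G}(X)) = Σ_{[α] ∈ Hom(Γ,G)/G} h(G ×_{C_G(α(Γ))} X^{α(Γ)})`. -/
theorem stmt9 (Γ G X : Type u) [Group Γ] [Group G] [Finite G] [MulAction G X]
    [Fintype (Quotient (conjSetoid Γ G))]
    (M : Type*) [AddCommGroup M] (h : GSet G → M)
    (hIso : ∀ Y Z : GSet G,
      (∃ e : Y.carrier ≃ Z.carrier, ∀ g y, e (Y.smul g y) = Z.smul g (e y)) → h Y = h Z)
    (hAdd : ∀ (ι : Type u) (_ : Fintype ι) (Y : ι → GSet G) (Z : GSet G),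
      (∃ e : Z.carrier ≃ Σ i, (Y i).carrier,
        ∀ g z, e (Z.smul g z) = ⟨(e z).1, (Y (e z).1).smul g (e z).2⟩) →
      h Z = ∑ᶠ i, h (Y i)) :
    h (fixGSet Γ G X) =
      ∑ᶠ q : Quotient (conjSetoid Γ G), h (indGSet Γ G X (Quotient.out q)) :=
  stmt9_general Γ G X M h hIso hAdd
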